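/- Let A be a commutative local ring with nilradical N, E a nonzero A-module, and R = A ⋉ E. Then R is an fqp-ring if and only if A is an fqp-ring and either (1) A is a valuation domain and E is divisible and uniserial, or (2) E is divisible and torsion-free over A/N, every zero-divisor of A lies in N, and N² = 0. -/

import Mathlib

set_option linter.unusedSectionVars false
set_option maxHeartbeats 1000000

/-- A commutative ring is a chain ring if its ideals are totally ordered by inclusion. -/
def ChainRing (R : Type*) [CommRing R] : Prop := ∀ I J : Ideal R, I ≤ J ∨ J ≤ I

/-- A module `V` is quasi-projective if `Hom(V, V) → Hom(V, V/X)` is surjective for every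
submodule `X` of `V`. -/
def QuasiProjective (R V : Type*) [CommRing R] [AddCommGroup V] [Module R V] : Prop :=
  ∀ (X : Submodule R V) (f : V →ₗ[R] V ⧸ X), ∃ g : V →ₗ[R] V, X.mkQ.comp g = f

/-- An fqp-ring is a commutative ring all of whose finitely generated ideals are
quasi-projective. -/
def IsFqpRing (R : Type*) [CommRing R] : Prop :=
  ∀ I : Ideal R, I.FG → QuasiProjective R I

/-! ### Generic module-theoretic helper lemmas -/

section Helpers

variable {R : Type*} [CommRing R] {M : Type*} [AddCommGroup M] [Module R M]

theorem exists_linearMap_pair {x y : M} (hgen : ∀ m : M, ∃ r s : R, m = r • x + s • y)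
    {P : Type*} [AddCommGroup P] [Module R P] (t₁ t₂ : P)
    (hw : ∀ r s : R, r • x + s • y = 0 → r • t₁ + s • t₂ = 0) :
    ∃ f : M →ₗ[R] P, f x = t₁ ∧ f y = t₂ := by
  classical
  set π : (R × R) →ₗ[R] M :=
    (LinearMap.toSpanSingleton R M x).coprod (LinearMap.toSpanSingleton R M y) with hπ
  have hsurj : Function.Surjective π := by
    intro m
    obtain ⟨r, s, hm⟩ := hgen m
    exact ⟨(r, s), hm.symm⟩
  set ψ : (R × R) →ₗ[R] P :=
    (LinearMap.toSpanSingleton R P t₁).coprod (LinearMap.toSpanSingleton R P t₂) with hψ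
  have hker : LinearMap.ker π ≤ LinearMap.ker ψ := by
    intro ⟨r, s⟩ h
    simp only [LinearMap.mem_ker, hπ, hψ, LinearMap.coprod_apply,
      LinearMap.toSpanSingleton_apply] at *
    exact hw r s h
  set e := LinearMap.quotKerEquivOfSurjective π hsurj with he
  have hemk : ∀ p : R × R, e (Submodule.Quotient.mk p) = π p := by
    intro p
    rfl
  set f : M →ₗ[R] P := ((LinearMap.ker π).liftQ ψ hker).comp e.symm.toLinearMap with hf
  have key : ∀ p : R × R, f (π p) = ψ p := by
    intro p
    have : e.symm.toLinearMap (π p) = Submodule.Quotient.mk p := by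
      apply e.injective
      rw [LinearEquiv.coe_toLinearMap, LinearEquiv.apply_symm_apply, hemk]
    rw [LinearEquiv.coe_toLinearMap] at this
    show ((LinearMap.ker π).liftQ ψ hker) (e.symm (π p)) = ψ p
    rw [this, Submodule.liftQ_apply]
  refine ⟨f, ?_, ?_⟩
  · have := key (1, 0)
    simpa [hπ, hψ] using this
  · have := key (0, 1)
    simpa [hπ, hψ] using this

theorem exists_linearMap_fin {n : ℕ} {v : Fin n → M}
    (hgen : ⊤ ≤ Submodule.span R (Set.range v))
    {P : Type*} [AddCommGroup P] [Module R P] (w : Fin n → P)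
    (hw : ∀ c : Fin n → R, (∑ i, c i • v i) = 0 → (∑ i, c i • w i) = 0) :
    ∃ f : M →ₗ[R] P, ∀ i, f (v i) = w i := by
  classical
  set π : (Fin n → R) →ₗ[R] M := Fintype.linearCombination R v with hπ
  have hπa : ∀ c, π c = ∑ i, c i • v i := fun c => by
    simp [hπ, Fintype.linearCombination_apply]
  have hsurj : Function.Surjective π := by
    intro m
    have : m ∈ Submodule.span R (Set.range v) := hgen trivial
    obtain ⟨c, hc⟩ := (Submodule.mem_span_range_iff_exists_fun R).mp this
    exact ⟨c, by rw [hπa]; exact hc⟩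
  set ψ : (Fin n → R) →ₗ[R] P := Fintype.linearCombination R w with hψ
  have hψa : ∀ c, ψ c = ∑ i, c i • w i := fun c => by
    simp [hψ, Fintype.linearCombination_apply]
  have hker : LinearMap.ker π ≤ LinearMap.ker ψ := by
    intro c hc
    rw [LinearMap.mem_ker, hψa]
    rw [LinearMap.mem_ker, hπa c] at hc
    exact hw c hc
  set e := LinearMap.quotKerEquivOfSurjective π hsurj with he
  have hemk : ∀ p, e (Submodule.Quotient.mk p) = π p := fun p => rfl
  set f : M →ₗ[R] P := ((LinearMap.ker π).liftQ ψ hker).comp e.symm.toLinearMap with hf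
  have key : ∀ p, f (π p) = ψ p := by
    intro p
    have h1 : e.symm.toLinearMap (π p) = Submodule.Quotient.mk p := by
      apply e.injective
      rw [LinearEquiv.coe_toLinearMap, LinearEquiv.apply_symm_apply, hemk]
    rw [LinearEquiv.coe_toLinearMap] at h1
    show ((LinearMap.ker π).liftQ ψ hker) (e.symm (π p)) = ψ p
    rw [h1, Submodule.liftQ_apply]
  refine ⟨f, fun i => ?_⟩
  have h2 := key (Pi.single i 1)
  rw [hπa (Pi.single i 1), hψa (Pi.single i 1)] at h2
  simpa [Pi.single_apply] using h2

theorem isUnit_smul_eq_zero {u : R} (hu : IsUnit u) {m : M} (h : u • m = 0) : m = 0 :=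
  (smul_eq_zero_iff_eq hu.unit).mp (by simp only [Units.smul_def, IsUnit.unit_spec]; exact h)

theorem eq_unit_inv_smul {u : R} (hu : IsUnit u) {m n : M} (h : u • m = n) :
    m = hu.unit⁻¹ • n := by
  rw [← h, ← smul_assoc]
  simp [Units.smul_def, smul_smul]

theorem isUnit_one_add_of_nonunit [IsLocalRing R] {t : R} (ht : ¬ IsUnit t) :
    IsUnit (1 + t) := by
  have : IsUnit (1 - (-t)) :=
    IsLocalRing.isUnit_one_sub_self_of_mem_nonunits (-t) (by simpa [mem_nonunits_iff] using ht)
  simpa using this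

/-- A cyclic module is quasi-projective. -/
theorem quasiProjective_of_cyclic {z : M} (hz : ∀ m : M, ∃ r : R, m = r • z) :
    QuasiProjective R M := by
  intro X f
  obtain ⟨w, hw⟩ : ∃ w : M, X.mkQ w = f z := X.mkQ_surjective (f z)
  obtain ⟨c, hc⟩ := hz w
  refine ⟨c • LinearMap.id, ?_⟩
  ext m
  obtain ⟨r, rfl⟩ := hz m
  have : (c • LinearMap.id : M →ₗ[R] M) (r • z) = r • (c • z) := by
    simp [smul_comm r c]
  rw [LinearMap.comp_apply, this, map_smul, ← hc, hw, ← map_smul]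

/-- The splitting lemma: a quasi-projective module over a local ring generated by two
elements neither of which lies in the span of the other decomposes: every relation splits. -/
theorem split_of_quasiProjective [IsLocalRing R] (hqp : QuasiProjective R M) {x y : M}
    (hgen : ∀ m : M, ∃ r s : R, m = r • x + s • y)
    (hxy : x ∉ Submodule.span R {y}) (hyx : y ∉ Submodule.span R {x}) :
    ∀ r s : R, r • x + s • y = 0 → r • x = 0 := by
  classical
  set X : Submodule R M := Submodule.span R {x} ⊓ Submodule.span R {y} with hX
  obtain ⟨f, hfx, hfy⟩ := exists_linearMap_pair hgen (P := M ⧸ X) (X.mkQ x) 0 (by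
    intro r s h
    have h1 : r • x ∈ X := by
      constructor
      · exact Submodule.smul_mem _ r (Submodule.mem_span_singleton_self x)
      · have : r • x = (-s) • y := by
          rw [neg_smul]; linear_combination (norm := module) h
        rw [this]
        exact Submodule.smul_mem _ (-s) (Submodule.mem_span_singleton_self y)
    have h2 : r • X.mkQ x = X.mkQ (r • x) := (map_smul _ _ _).symm
    rw [smul_zero, add_zero, h2, Submodule.mkQ_apply, Submodule.Quotient.mk_eq_zero]
    exact h1)
  obtain ⟨g, hg⟩ := hqp X f
  have hgx : g x - x ∈ X := by
    have h3 : X.mkQ (g x) = X.mkQ x := by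
      have := congrArg (fun h => h x) (congrArg DFunLike.coe hg)
      simpa [hfx] using this
    rwa [Submodule.mkQ_apply, Submodule.mkQ_apply, Submodule.Quotient.eq] at h3
  have hgy : g y ∈ X := by
    have h3 : X.mkQ (g y) = 0 := by
      have := congrArg (fun h => h y) (congrArg DFunLike.coe hg)
      simpa [hfy] using this
    rwa [Submodule.mkQ_apply, Submodule.Quotient.mk_eq_zero] at h3
  obtain ⟨t, ht⟩ : ∃ t : R, t • x = g x - x := Submodule.mem_span_singleton.mp hgx.1
  have htnu : ¬ IsUnit t := by
    intro hu
    exact hxy (by rw [eq_unit_inv_smul hu ht]; exact Submodule.smul_mem _ _ hgx.2)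
  intro r s h
  have hrel : r • g x + s • g y = 0 := by
    have : g (r • x + s • y) = 0 := by rw [h, map_zero]
    simpa [map_add, map_smul] using this
  have hu1 : IsUnit (1 + t) := isUnit_one_add_of_nonunit htnu
  have key : (1 + t) • (r • x) = s • (-(g y)) := by
    have hgx' : g x = t • x + x := sub_eq_iff_eq_add.mp ht.symm
    calc (1 + t) • (r • x) = r • (t • x + x) := by module
      _ = r • g x := by rw [hgx']
      _ = - (s • g y) := by linear_combination (norm := module) hrel
      _ = s • (-(g y)) := by module
  have hη : -(g y) ∈ X := neg_mem hgy
  have h2 : r • x = s • (hu1.unit⁻¹ • (-(g y))) := by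
    rw [eq_unit_inv_smul hu1 key]
    exact smul_comm _ _ _
  set η' := hu1.unit⁻¹ • (-(g y)) with hη'
  have hη'X : η' ∈ X := Submodule.smul_mem _ _ hη
  obtain ⟨w, hwy⟩ : ∃ w : R, w • y = η' := Submodule.mem_span_singleton.mp hη'X.2
  have hwnu : ¬ IsUnit w := by
    intro hu
    exact hyx (by rw [eq_unit_inv_smul hu hwy]; exact Submodule.smul_mem _ _ hη'X.1)
  have hu2 : IsUnit (1 + w) := isUnit_one_add_of_nonunit hwnu
  have hfin : (1 + w) • (s • y) = 0 := by
    have h4 : r • x = (s * w) • y := by rw [h2, ← hwy, mul_smul]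
    calc (1 + w) • (s • y) = s • y + (s * w) • y := by module
      _ = s • y + r • x := by rw [h4]
      _ = 0 := by linear_combination (norm := module) h
  have hsy : s • y = 0 := isUnit_smul_eq_zero hu2 hfin
  have : r • x = - (s • y) := by linear_combination (norm := module) h
  rw [this, hsy, neg_zero]

/-- Annihilator comparison for split two-generated quasi-projective modules. -/
theorem ann_le_of_quasiProjective [IsLocalRing R] (hqp : QuasiProjective R M) {x y : M}
    (hgen : ∀ m : M, ∃ r s : R, m = r • x + s • y)
    (hsplit : ∀ r s : R, r • x + s • y = 0 → r • x = 0) (hx : x ≠ 0) :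
    ∀ a : R, a • x = 0 → a • y = 0 := by
  classical
  set K : Submodule R R := LinearMap.ker (LinearMap.toSpanSingleton R M x) with hK
  set X : Submodule R M := Submodule.map (LinearMap.toSpanSingleton R M y) K with hX
  obtain ⟨f, hfx, hfy⟩ := exists_linearMap_pair hgen (P := M ⧸ X) (X.mkQ y) 0 (by
    intro r s h
    rw [smul_zero, add_zero]
    have hr : r ∈ K := by
      simpa [hK, LinearMap.mem_ker, LinearMap.toSpanSingleton_apply] using hsplit r s h
    have : r • y ∈ X := ⟨r, hr, by simp [LinearMap.toSpanSingleton_apply]⟩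
    rw [← map_smul, Submodule.mkQ_apply, Submodule.Quotient.mk_eq_zero]
    exact this)
  obtain ⟨g, hg⟩ := hqp X f
  have hgx : g x - y ∈ X := by
    have h3 : X.mkQ (g x) = X.mkQ y := by
      have := congrArg (fun h => h x) (congrArg DFunLike.coe hg)
      simpa [hfx] using this
    rwa [Submodule.mkQ_apply, Submodule.mkQ_apply, Submodule.Quotient.eq] at h3
  obtain ⟨t, htK, ht⟩ : ∃ t, t ∈ K ∧ t • y = g x - y := by
    obtain ⟨t, htK, ht⟩ := hgx
    exact ⟨t, htK, by simpa [LinearMap.toSpanSingleton_apply] using ht⟩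
  have htnu : ¬ IsUnit t := by
    intro hu
    have : t • x = 0 := by simpa [hK, LinearMap.mem_ker, LinearMap.toSpanSingleton_apply] using htK
    exact hx (isUnit_smul_eq_zero hu this)
  intro a hax
  have h0 : a • g x = 0 := by
    have : g (a • x) = 0 := by rw [hax, map_zero]
    simpa [map_smul] using this
  have hgx' : g x = t • y + y := sub_eq_iff_eq_add.mp ht.symm
  have hfin : (1 + t) • (a • y) = 0 := by
    calc (1 + t) • (a • y) = a • (t • y + y) := by module
      _ = a • g x := by rw [hgx']
      _ = 0 := h0
  exact isUnit_smul_eq_zero (isUnit_one_add_of_nonunit htnu) hfin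

/-- In a finite nonempty family of pairwise divisibility-comparable elements there is one
dividing all others. -/
theorem finset_exists_dvd_all {ι : Type*} (T : Finset ι) (hne : T.Nonempty) (f : ι → R)
    (hcmp : ∀ i ∈ T, ∀ j ∈ T, f i ∣ f j ∨ f j ∣ f i) :
    ∃ j ∈ T, ∀ i ∈ T, f j ∣ f i := by
  classical
  induction T using Finset.cons_induction with
  | empty => exact absurd hne (by simp)
  | cons a s ha ih =>
    rcases s.eq_empty_or_nonempty with rfl | hs
    · refine ⟨a, Finset.mem_cons_self a _, ?_⟩
      intro i hi
      rcases Finset.mem_cons.mp hi with rfl | hi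
      · exact dvd_rfl
      · simp at hi
    · obtain ⟨j, hj, hjall⟩ := ih hs (fun i hi j hj =>
        hcmp i (Finset.mem_cons.mpr (Or.inr hi)) j (Finset.mem_cons.mpr (Or.inr hj)))
      rcases hcmp a (Finset.mem_cons_self a _) j (Finset.mem_cons.mpr (Or.inr hj)) with h | h
      · exact ⟨a, Finset.mem_cons_self a _, by
          intro i hi
          rcases Finset.mem_cons.mp hi with rfl | hi
          · exact dvd_rfl
          · exact h.trans (hjall i hi)⟩
      · exact ⟨j, Finset.mem_cons.mpr (Or.inr hj), by
          intro i hi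
          rcases Finset.mem_cons.mp hi with rfl | hi
          · exact h
          · exact hjall i hi⟩

theorem exists_gens_semifree (𝔫 : Ideal R)
    (h𝔫M : ∀ c ∈ 𝔫, ∀ m : M, c • m = (0 : M))
    (hTF : ∀ c ∉ 𝔫, ∀ m : M, c • m = 0 → m = 0)
    (hcmp : ∀ c ∉ 𝔫, ∀ d ∉ 𝔫, c ∣ d ∨ d ∣ c) :
    ∀ (n : ℕ) (v : Fin n → M), ⊤ ≤ Submodule.span R (Set.range v) →
      ∃ (k : ℕ) (u : Fin k → M), (⊤ ≤ Submodule.span R (Set.range u)) ∧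
        ∀ c : Fin k → R, (∑ i, c i • u i) = 0 → ∀ i, c i ∈ 𝔫 := by
  classical
  intro n
  induction n with
  | zero => intro v hv; exact ⟨0, v, hv, fun c _ i => i.elim0⟩
  | succ n ih =>
    intro v hv
    by_cases hgood : ∀ c : Fin (n+1) → R, (∑ i, c i • v i) = 0 → ∀ i, c i ∈ 𝔫
    · exact ⟨n+1, v, hv, hgood⟩
    push_neg at hgood
    obtain ⟨c, hc0, j, hj𝔫⟩ := hgood
    set T : Finset (Fin (n+1)) := Finset.univ.filter (fun i => c i ∉ 𝔫) with hT
    have hjT : j ∈ T := by simp [hT, hj𝔫]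
    obtain ⟨jm, hjm, hjmdvd⟩ := finset_exists_dvd_all T ⟨j, hjT⟩ c (by
      intro i hi j' hj'
      simp only [hT, Finset.mem_filter] at hi hj'
      exact hcmp (c i) hi.2 (c j') hj'.2)
    have hjm𝔫 : c jm ∉ 𝔫 := by simpa [hT] using hjm
    have hd : ∀ k : Fin n, ∃ d : R, c (jm.succAbove k) • v (jm.succAbove k)
        = c jm • (d • v (jm.succAbove k)) := by
      intro k
      by_cases hk : c (jm.succAbove k) ∈ 𝔫
      · exact ⟨0, by rw [h𝔫M _ hk]; simp⟩
      · obtain ⟨d, hd⟩ := hjmdvd (jm.succAbove k) (by simp [hT, hk])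
        exact ⟨d, by rw [smul_smul, ← hd]⟩
    choose d hdspec using hd
    have hsum : c jm • (v jm + ∑ k : Fin n, d k • v (jm.succAbove k)) = 0 := by
      rw [smul_add, Finset.smul_sum]
      calc c jm • v jm + ∑ k : Fin n, c jm • (d k • v (jm.succAbove k))
          = c jm • v jm + ∑ k : Fin n, c (jm.succAbove k) • v (jm.succAbove k) := by
            rw [Finset.sum_congr rfl (fun k _ => (hdspec k).symm)]
        _ = ∑ i : Fin (n+1), c i • v i := (Fin.sum_univ_succAbove (fun i => c i • v i) jm).symm
        _ = 0 := hc0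
    have hvjm : v jm = - ∑ k : Fin n, d k • v (jm.succAbove k) := by
      have := hTF (c jm) hjm𝔫 _ hsum
      linear_combination (norm := module) this
    set v' : Fin n → M := v ∘ jm.succAbove with hv'
    have hv'gen : ⊤ ≤ Submodule.span R (Set.range v') := by
      have hsub : ∀ i : Fin (n+1), v i ∈ Submodule.span R (Set.range v') := by
        intro i
        by_cases hi : i = jm
        · subst hi
          rw [hvjm]
          refine neg_mem (Submodule.sum_mem _ (fun k _ => Submodule.smul_mem _ _ ?_))
          exact Submodule.subset_span ⟨k, rfl⟩
        · obtain ⟨k, hk⟩ := Fin.exists_succAbove_eq (Ne.symm (by exact fun h => hi h.symm) : i ≠ jm)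
          exact Submodule.subset_span ⟨k, by simp [hv', hk]⟩
      calc (⊤ : Submodule R M) ≤ Submodule.span R (Set.range v) := hv
        _ ≤ Submodule.span R (Set.range v') := by
            rw [Submodule.span_le]
            rintro _ ⟨i, rfl⟩
            exact hsub i
    exact ih v' hv'gen

theorem quasiProjective_of_semifree (𝔫 : Ideal R)
    (h𝔫M : ∀ c ∈ 𝔫, ∀ m : M, c • m = (0 : M))
    (hTF : ∀ c ∉ 𝔫, ∀ m : M, c • m = 0 → m = 0)
    (hcmp : ∀ c ∉ 𝔫, ∀ d ∉ 𝔫, c ∣ d ∨ d ∣ c)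
    {n : ℕ} {v : Fin n → M} (hv : ⊤ ≤ Submodule.span R (Set.range v)) :
    QuasiProjective R M := by
  classical
  obtain ⟨k, u, hugen, hurel⟩ := exists_gens_semifree 𝔫 h𝔫M hTF hcmp n v hv
  intro X f
  choose w hw using fun i => X.mkQ_surjective (f (u i))
  obtain ⟨g, hg⟩ := exists_linearMap_fin hugen w (by
    intro c hc
    have := hurel c hc
    exact Finset.sum_eq_zero (fun i _ => h𝔫M (c i) (this i) (w i)))
  refine ⟨g, ?_⟩
  apply LinearMap.ext_on (le_antisymm le_top hugen)
  rintro _ ⟨i, rfl⟩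
  rw [LinearMap.comp_apply, hg i, hw i]

theorem totalOrder_submodule_of_elementwise {E : Type*} [AddCommGroup E] [Module R E]
    (hcmp : ∀ e f : E, e ∈ Submodule.span R {f} ∨ f ∈ Submodule.span R {e}) :
    ∀ M N : Submodule R E, M ≤ N ∨ N ≤ M := by
  intro M N
  by_cases hMN : M ≤ N
  · exact Or.inl hMN
  right
  obtain ⟨x, hxM, hxN⟩ := Set.not_subset.mp hMN
  intro y hyN
  rcases hcmp x y with hx | hy
  · obtain ⟨a, ha⟩ := Submodule.mem_span_singleton.mp hx
    exact absurd (ha ▸ Submodule.smul_mem N a hyN) hxN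
  · obtain ⟨a, ha⟩ := Submodule.mem_span_singleton.mp hy
    exact ha ▸ Submodule.smul_mem M a hxM

theorem chainRing_of_dvd {S : Type*} [CommRing S] (hcmp : ∀ x y : S, x ∣ y ∨ y ∣ x) :
    ChainRing S := by
  intro I J
  by_cases hIJ : I ≤ J
  · exact Or.inl hIJ
  right
  obtain ⟨x, hxI, hxJ⟩ := Set.not_subset.mp hIJ
  intro y hyJ
  rcases hcmp x y with h | h
  · obtain ⟨c, rfl⟩ := h
    exact Ideal.mul_mem_right c I hxI
  · obtain ⟨c, rfl⟩ := h
    exact absurd (Ideal.mul_mem_right c J hyJ) hxJ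

theorem fg_ideal_principal {S : Type*} [CommRing S] (𝔫 : Ideal S)
    (h1 : ∀ x ∉ 𝔫, ∀ y ∉ 𝔫, x ∣ y ∨ y ∣ x)
    (h2 : ∀ x ∉ 𝔫, ∀ y ∈ 𝔫, x ∣ y)
    {I : Ideal S} (hI : I.FG) (hI𝔫 : ¬ I ≤ 𝔫) : ∃ z ∈ I, I = Ideal.span {z} := by
  classical
  obtain ⟨T, hT⟩ := hI
  have hTne : ∃ t ∈ T, t ∉ 𝔫 := by
    by_contra hc
    push_neg at hc
    exact hI𝔫 (hT ▸ Ideal.span_le.mpr (fun t ht => hc t ht))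
  obtain ⟨t₀, ht₀T, ht₀⟩ := hTne
  set T' : Finset S := T.filter (fun t => t ∉ 𝔫) with hT'
  obtain ⟨z, hzT', hzdvd⟩ := finset_exists_dvd_all T' ⟨t₀, by simp [hT', ht₀T, ht₀]⟩ id (by
    intro i hi j hj
    simp only [hT', Finset.mem_filter] at hi hj
    exact h1 i hi.2 j hj.2)
  simp only [hT', Finset.mem_filter] at hzT'
  refine ⟨z, hT ▸ Ideal.subset_span hzT'.1, le_antisymm ?_ ?_⟩
  · rw [← hT, Ideal.span_le]
    intro t ht
    rw [SetLike.mem_coe, Ideal.mem_span_singleton]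
    by_cases ht𝔫 : t ∈ 𝔫
    · exact h2 z hzT'.2 t ht𝔫
    · exact hzdvd t (by simp only [hT', Finset.mem_filter]; exact ⟨ht, ht𝔫⟩)
  · rw [Ideal.span_le, Set.singleton_subset_iff, SetLike.mem_coe, ← hT]
    exact Ideal.subset_span hzT'.1

theorem quasiProjective_ideal_of_principal {S : Type*} [CommRing S] {I : Ideal S} {z : S}
    (hz : I = Ideal.span {z}) : QuasiProjective S I := by
  have hzI : z ∈ I := hz ▸ Ideal.subset_span rfl
  apply quasiProjective_of_cyclic (z := (⟨z, hzI⟩ : I))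
  rintro ⟨m, hm⟩
  obtain ⟨a, ha⟩ := Ideal.mem_span_singleton'.mp (hz ▸ hm)
  exact ⟨a, Subtype.ext (by simpa using ha.symm)⟩

theorem isFqpRing_of_dvd_total {S : Type*} [CommRing S] (hcmp : ∀ x y : S, x ∣ y ∨ y ∣ x) :
    IsFqpRing S := by
  intro I hI
  by_cases hbot : I ≤ ⊥
  · have : I = Ideal.span {0} := by
      have h0 : I = ⊥ := le_bot_iff.mp hbot
      rw [h0, Ideal.span_singleton_eq_bot.mpr rfl]
    exact quasiProjective_ideal_of_principal this
  · obtain ⟨z, _, hz⟩ := fg_ideal_principal ⊥ (fun x _ y _ => hcmp x y)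
      (fun x _ y hy => by simp at hy; simp [hy]) hI hbot
    exact quasiProjective_ideal_of_principal hz

theorem isFqpRing_of_nil_structure {S : Type*} [CommRing S] (𝔫 : Ideal S)
    (h1 : ∀ x ∉ 𝔫, ∀ y ∉ 𝔫, x ∣ y ∨ y ∣ x)
    (h2 : ∀ x ∉ 𝔫, ∀ y ∈ 𝔫, x ∣ y)
    (hsq : ∀ x ∈ 𝔫, ∀ y ∈ 𝔫, x * y = 0)
    (hreg : ∀ x ∉ 𝔫, ∀ y : S, x * y = 0 → y = 0) :
    IsFqpRing S := by
  intro I hI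
  by_cases hI𝔫 : I ≤ 𝔫
  · -- semifree case
    have hfg : (⊤ : Submodule S I).FG := (Submodule.fg_top I).mpr hI
    obtain ⟨n, v, hv⟩ := Submodule.fg_iff_exists_fin_generating_family.mp hfg
    apply quasiProjective_of_semifree (M := I) 𝔫
    · intro c hc m
      apply Subtype.ext
      have : (↑(c • m) : S) = c * (m : S) := rfl
      rw [this, hsq c hc (m : S) (hI𝔫 m.2)]
      rfl
    · intro c hc m hm
      apply Subtype.ext
      have : (↑(c • m) : S) = c * (m : S) := rfl
      have h0 : c * (m : S) = 0 := by
        rw [← this, hm]; rfl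
      exact hreg c hc _ h0
    · exact h1
    · exact le_of_eq hv.symm
  · obtain ⟨z, _, hz⟩ := fg_ideal_principal 𝔫 h1 h2 hI hI𝔫
    exact quasiProjective_ideal_of_principal hz

end Helpers

/-! ### Consequences of quasi-projectivity for pairs of ring elements -/

section PairFacts
variable {S : Type*} [CommRing S] [IsLocalRing S]

theorem fqp_pair_facts (h : IsFqpRing S) {x y : S}
    (hxy : x ∉ Ideal.span {y}) (hyx : y ∉ Ideal.span {x}) :
    (∀ r s : S, r * x + s * y = 0 → r * x = 0) ∧
      (x ≠ 0 → ∀ a : S, a * x = 0 → a * y = 0) := by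
  classical
  set I : Ideal S := Ideal.span {x, y} with hI
  have hqp : QuasiProjective S I := h I (Submodule.fg_span (Set.toFinite _))
  have hxm : x ∈ I := Ideal.subset_span (by simp)
  have hym : y ∈ I := Ideal.subset_span (by simp)
  set xI : I := ⟨x, hxm⟩ with hxI
  set yI : I := ⟨y, hym⟩ with hyI
  have hgen : ∀ m : I, ∃ r s : S, m = r • xI + s • yI := by
    rintro ⟨m, hm⟩
    obtain ⟨a, b, hab⟩ := Ideal.mem_span_pair.mp hm
    exact ⟨a, b, Subtype.ext (by simp [hxI, hyI, ← hab])⟩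
  have hspan : ∀ (u v : S) (hu : u ∈ I) (hv : v ∈ I), ((⟨u, hu⟩ : I) ∈
      Submodule.span S {(⟨v, hv⟩ : I)}) ↔ u ∈ Ideal.span {v} := by
    intro u v hu hv
    rw [Submodule.mem_span_singleton, Ideal.mem_span_singleton]
    constructor
    · rintro ⟨a, ha⟩
      have := congrArg (Subtype.val) ha
      exact Dvd.intro_left a (by simpa using this)
    · rintro ⟨a, ha⟩
      exact ⟨a, Subtype.ext (by simpa [mul_comm] using ha.symm)⟩
  have hxy' : xI ∉ Submodule.span S {yI} := fun hmem => hxy ((hspan x y hxm hym).mp hmem)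
  have hyx' : yI ∉ Submodule.span S {xI} := fun hmem => hyx ((hspan y x hym hxm).mp hmem)
  have hsplit := split_of_quasiProjective hqp hgen hxy' hyx'
  constructor
  · intro r s hrel
    have : r • xI + s • yI = 0 := Subtype.ext (by simpa using hrel)
    have := hsplit r s this
    simpa using congrArg Subtype.val this
  · intro hx a hax
    have hxI0 : xI ≠ 0 := fun h0 => hx (by simpa [hxI] using congrArg Subtype.val h0)
    have := ann_le_of_quasiProjective hqp hgen hsplit hxI0 a
      (Subtype.ext (by simpa using hax))
    simpa using congrArg Subtype.val this

theorem fqp_dvd_or (h : IsFqpRing S) (x y : S) : y ∣ x ∨ x ∣ y ∨ x * y = 0 := by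
  by_cases hxy : x ∈ Ideal.span {y}
  · exact Or.inl (Ideal.mem_span_singleton.mp hxy)
  by_cases hyx : y ∈ Ideal.span {x}
  · exact Or.inr (Or.inl (Ideal.mem_span_singleton.mp hyx))
  refine Or.inr (Or.inr ?_)
  have := (fqp_pair_facts h hxy hyx).1 y (-x) (by ring)
  calc x * y = y * x := mul_comm x y
    _ = 0 := this

theorem fqp_ann_eq (h : IsFqpRing S) {x y : S} (hx : x ≠ 0)
    (hxy : x ∉ Ideal.span {y}) (hyx : y ∉ Ideal.span {x}) :
    ∀ a : S, a * x = 0 → a * y = 0 :=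
  (fqp_pair_facts h hxy hyx).2 hx

end PairFacts

/-! ### The trivial extension -/

section Tsze

open TrivSqZeroExt

variable {A E : Type*} [CommRing A] [IsLocalRing A] [AddCommGroup E] [Module A E]
  [Module Aᵐᵒᵖ E] [IsCentralScalar A E]

theorem tsze_isLocalRing : IsLocalRing (TrivSqZeroExt A E) := by
  apply IsLocalRing.of_isUnit_or_isUnit_one_sub_self
  intro z
  rcases IsLocalRing.isUnit_or_isUnit_one_sub_self (z.fst) with h | h
  · exact Or.inl (TrivSqZeroExt.isUnit_iff_isUnit_fst.mpr h)
  · refine Or.inr (TrivSqZeroExt.isUnit_iff_isUnit_fst.mpr ?_)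
    simpa using h

theorem tsze_inl_dvd_inl_iff {a b : A} :
    (inl a : TrivSqZeroExt A E) ∣ inl b ↔ a ∣ b := by
  constructor
  · rintro ⟨u, hu⟩
    exact ⟨u.fst, by simpa using congrArg fst hu⟩
  · rintro ⟨c, rfl⟩
    exact ⟨inl c, by rw [inl_mul_inl]⟩

theorem tsze_inr_dvd_inl {e : E} {a : A} (h : (inr e : TrivSqZeroExt A E) ∣ inl a) :
    a = 0 := by
  obtain ⟨u, hu⟩ := h
  simpa using congrArg fst hu

theorem tsze_inl_dvd_inr_iff {a : A} {e : E} :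
    (inl a : TrivSqZeroExt A E) ∣ inr e ↔ ∃ s : E, e = a • s := by
  constructor
  · rintro ⟨u, hu⟩
    refine ⟨u.snd, ?_⟩
    have := congrArg snd hu
    simpa [snd_mul] using this
  · rintro ⟨s, rfl⟩
    exact ⟨inr s, by rw [inl_mul_inr]⟩

theorem tsze_inr_dvd_inr_iff {e f : E} :
    (inr e : TrivSqZeroExt A E) ∣ inr f ↔ ∃ c : A, f = c • e := by
  constructor
  · rintro ⟨u, hu⟩
    refine ⟨u.fst, ?_⟩
    have := congrArg snd hu
    simpa [snd_mul, op_smul_eq_smul] using this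
  · rintro ⟨c, rfl⟩
    exact ⟨inl c, by rw [mul_comm, inl_mul_inr]⟩

theorem tsze_inl_eq_zero_iff {a : A} : (inl a : TrivSqZeroExt A E) = 0 ↔ a = 0 := by
  constructor
  · intro h; simpa using congrArg fst h
  · rintro rfl; exact inl_zero E

theorem tsze_inr_eq_zero_iff {e : E} : (inr e : TrivSqZeroExt A E) = 0 ↔ e = 0 := by
  constructor
  · intro h; simpa using congrArg snd h
  · rintro rfl; exact inr_zero A

end Tsze

/-! ### Forward direction -/
section Forward
open TrivSqZeroExt
variable {A E : Type*} [CommRing A] [IsLocalRing A] [AddCommGroup E] [Module A E]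
  [Module Aᵐᵒᵖ E] [IsCentralScalar A E] [Nontrivial E]

attribute [local instance] tsze_isLocalRing

theorem no_nil_divisible {n : A} (hn : n ∈ nilradical A)
    (h : ∀ x : E, ∃ y : E, x = n • y) : False := by
  obtain ⟨k, hk⟩ := mem_nilradical.mp hn
  have hj : ∀ (j : ℕ) (x : E), ∃ y : E, x = n ^ j • y := by
    intro j
    induction j with
    | zero => exact fun x => ⟨x, by simp⟩
    | succ j ih =>
      intro x
      obtain ⟨y₁, hy₁⟩ := h x
      obtain ⟨y₂, hy₂⟩ := ih y₁
      exact ⟨y₂, by rw [hy₁, hy₂, ← mul_smul, ← pow_succ']⟩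
  obtain ⟨x, hx⟩ := exists_ne (0 : E)
  obtain ⟨y, hy⟩ := hj k x
  rw [hk, zero_smul] at hy
  exact hx hy

variable (hR : IsFqpRing (TrivSqZeroExt A E))

include hR

/-- Key pair analysis: if `e` is not divisible by `a ≠ 0`, then `a • e = 0` and `a * a = 0`. -/
theorem pair_undivisible {a : A} {e : E} (ha0 : a ≠ 0) (he : ¬ ∃ s : E, e = a • s) :
    a • e = 0 ∧ a * a = 0 := by
  have he0 : e ≠ 0 := fun h => he ⟨0, by simp [h]⟩
  have hxy : (inr e : TrivSqZeroExt A E) ∉ Ideal.span {inl a} := by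
    rw [Ideal.mem_span_singleton]
    intro hdvd
    exact he (tsze_inl_dvd_inr_iff.mp hdvd)
  have hyx : (inl a : TrivSqZeroExt A E) ∉ Ideal.span {inr e} := by
    rw [Ideal.mem_span_singleton]
    intro hdvd
    exact ha0 (tsze_inr_dvd_inl hdvd)
  have hsplit := (fqp_pair_facts hR hxy hyx).1
  have hae : a • e = 0 := by
    have hrel : (inl a : TrivSqZeroExt A E) * inr e + (-(inr e)) * inl a = 0 := by
      rw [neg_mul, mul_comm]
      abel
    have := hsplit (inl a) (-(inr e)) hrel
    rw [inl_mul_inr] at this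
    exact tsze_inr_eq_zero_iff.mp this
  refine ⟨hae, ?_⟩
  have hann := fqp_ann_eq hR (x := (inr e : TrivSqZeroExt A E)) (y := inl a)
    (fun h => he0 (tsze_inr_eq_zero_iff.mp h)) hxy hyx
  have h1 : (inl a : TrivSqZeroExt A E) * inr e = 0 := by
    rw [inl_mul_inr, hae, inr_zero]
  have h2 := hann (inl a) h1
  rw [inl_mul_inl] at h2
  exact tsze_inl_eq_zero_iff.mp h2

theorem nil_sq_zero : ∀ n ∈ nilradical A, n * n = 0 := by
  intro n hn
  by_cases hn0 : n = 0
  · simp [hn0]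
  have hex : ∃ e : E, ¬ ∃ s : E, e = n • s := by
    by_contra hc
    push_neg at hc
    exact no_nil_divisible hn hc
  obtain ⟨e, he⟩ := hex
  exact (pair_undivisible hR hn0 he).2

theorem nil_smul_zero : ∀ n ∈ nilradical A, ∀ e : E, n • e = 0 := by
  intro n hn e
  by_cases hn0 : n = 0
  · simp [hn0]
  by_cases he : ∃ s : E, e = n • s
  · obtain ⟨s, rfl⟩ := he
    rw [← mul_smul, nil_sq_zero hR n hn, zero_smul]
  · exact (pair_undivisible hR hn0 he).1

theorem nil_mul_nil : ∀ n ∈ nilradical A, ∀ n' ∈ nilradical A, n * n' = 0 := by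
  intro n hn n' hn'
  rcases fqp_dvd_or hR (inl n : TrivSqZeroExt A E) (inl n') with h | h | h
  · obtain ⟨c, rfl⟩ := tsze_inl_dvd_inl_iff.mp h
    calc (n' * c) * n' = (n' * n') * c := by ring
      _ = 0 := by rw [nil_sq_zero hR n' hn', zero_mul]
  · obtain ⟨c, rfl⟩ := tsze_inl_dvd_inl_iff.mp h
    calc n * (n * c) = (n * n) * c := by ring
      _ = 0 := by rw [nil_sq_zero hR n hn, zero_mul]
  · rw [inl_mul_inl] at h
    exact tsze_inl_eq_zero_iff.mp h

theorem forward_div : ∀ a ∉ nilradical A, ∀ e : E, ∃ s : E, e = a • s := by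
  intro a ha e
  by_contra he
  have ha0 : a ≠ 0 := fun h => ha (h ▸ (nilradical A).zero_mem)
  have := (pair_undivisible hR ha0 he).2
  exact ha (mem_nilradical.mpr ⟨2, by rw [pow_two]; exact this⟩)

theorem forward_reg : ∀ a ∉ nilradical A, ∀ b : A, a * b = 0 → b = 0 := by
  intro a ha b hab
  by_contra hb0
  have ha0 : a ≠ 0 := fun h => ha (h ▸ (nilradical A).zero_mem)
  have hbE : ∀ e : E, b • e = 0 := by
    intro e
    obtain ⟨s, rfl⟩ := forward_div hR a ha e
    rw [← mul_smul, mul_comm, hab, zero_smul]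
  have he₀ : ∃ e₀ : E, a • e₀ ≠ 0 := by
    by_contra hc
    push_neg at hc
    obtain ⟨x, hx⟩ := exists_ne (0 : E)
    obtain ⟨s, hs⟩ := forward_div hR a ha x
    exact hx (by rw [hs, hc s])
  obtain ⟨e₀, he₀⟩ := he₀
  have he₀0 : e₀ ≠ 0 := fun h => he₀ (by rw [h, smul_zero])
  have hxy : (inl b : TrivSqZeroExt A E) ∉ Ideal.span {inr e₀} := by
    rw [Ideal.mem_span_singleton]
    intro hdvd
    exact hb0 (tsze_inr_dvd_inl hdvd)
  have hyx : (inr e₀ : TrivSqZeroExt A E) ∉ Ideal.span {inl b} := by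
    rw [Ideal.mem_span_singleton]
    intro hdvd
    obtain ⟨s, hs⟩ := tsze_inl_dvd_inr_iff.mp hdvd
    rw [hbE s] at hs
    exact he₀0 hs
  have hann := fqp_ann_eq hR (x := (inl b : TrivSqZeroExt A E)) (y := inr e₀)
    (fun h => hb0 (tsze_inl_eq_zero_iff.mp h)) hxy hyx
  have h1 : (inl a : TrivSqZeroExt A E) * inl b = 0 := by
    rw [inl_mul_inl, hab, inl_zero]
  have h2 := hann (inl a) h1
  rw [inl_mul_inr] at h2
  exact he₀ (tsze_inr_eq_zero_iff.mp h2)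

theorem forward_cmpA : ∀ a ∉ nilradical A, ∀ b ∉ nilradical A, a ∣ b ∨ b ∣ a := by
  intro a ha b hb
  rcases fqp_dvd_or hR (inl a : TrivSqZeroExt A E) (inl b) with h | h | h
  · exact Or.inr (tsze_inl_dvd_inl_iff.mp h)
  · exact Or.inl (tsze_inl_dvd_inl_iff.mp h)
  · rw [inl_mul_inl] at h
    have hb0 := forward_reg hR a ha b (tsze_inl_eq_zero_iff.mp h)
    exact absurd (hb0 ▸ (nilradical A).zero_mem) hb

theorem forward_cmpN : ∀ a ∉ nilradical A, ∀ n ∈ nilradical A, a ∣ n := by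
  intro a ha n hn
  rcases fqp_dvd_or hR (inl a : TrivSqZeroExt A E) (inl n) with h | h | h
  · obtain ⟨c, rfl⟩ := tsze_inl_dvd_inl_iff.mp h
    exact absurd (Ideal.mul_mem_right c _ hn) ha
  · exact tsze_inl_dvd_inl_iff.mp h
  · rw [inl_mul_inl] at h
    rw [forward_reg hR a ha n (tsze_inl_eq_zero_iff.mp h)]
    exact dvd_zero a

end Forward


section Forward2
open TrivSqZeroExt
variable {A E : Type*} [CommRing A] [IsLocalRing A] [AddCommGroup E] [Module A E]
  [Module Aᵐᵒᵖ E] [IsCentralScalar A E] [Nontrivial E]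
attribute [local instance] tsze_isLocalRing
variable (hR : IsFqpRing (TrivSqZeroExt A E))
include hR

section NotTF
variable {a₀ : A} {x₀ : E} (ha₀ : a₀ ∉ nilradical A) (hax : a₀ • x₀ = 0) (hx₀ : x₀ ≠ 0)
include ha₀ hax hx₀

theorem notTF_nil_eq_bot : ∀ n ∈ nilradical A, n = (0 : A) := by
  intro n hn
  by_contra hn0
  have hxy : (inr x₀ : TrivSqZeroExt A E) ∉ Ideal.span {inl n} := by
    rw [Ideal.mem_span_singleton]
    intro hdvd
    obtain ⟨s, hs⟩ := tsze_inl_dvd_inr_iff.mp hdvd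
    rw [nil_smul_zero hR n hn s] at hs
    exact hx₀ hs
  have hyx : (inl n : TrivSqZeroExt A E) ∉ Ideal.span {inr x₀} := by
    rw [Ideal.mem_span_singleton]
    intro hdvd
    exact hn0 (tsze_inr_dvd_inl hdvd)
  have hann := fqp_ann_eq hR (x := (inr x₀ : TrivSqZeroExt A E)) (y := inl n)
    (fun h => hx₀ (tsze_inr_eq_zero_iff.mp h)) hxy hyx
  have h1 : (inl a₀ : TrivSqZeroExt A E) * inr x₀ = 0 := by
    rw [inl_mul_inr, hax, inr_zero]
  have h2 := hann (inl a₀) h1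
  rw [inl_mul_inl] at h2
  exact hn0 (forward_reg hR a₀ ha₀ n (tsze_inl_eq_zero_iff.mp h2))

theorem notTF_torsion : ∀ e : E, e ≠ 0 → ∃ c : A, c ≠ 0 ∧ c • e = 0 := by
  intro e he0
  have ha₀0 : a₀ ≠ 0 := fun h => ha₀ (h ▸ (nilradical A).zero_mem)
  by_cases hae : a₀ • e = 0
  · exact ⟨a₀, ha₀0, hae⟩
  by_cases hxy : (inr e : TrivSqZeroExt A E) ∈ Ideal.span {inr x₀}
  · rw [Ideal.mem_span_singleton] at hxy
    obtain ⟨c, hc⟩ := tsze_inr_dvd_inr_iff.mp hxy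
    exfalso
    apply hae
    rw [hc, smul_comm, hax, smul_zero]
  by_cases hyx : (inr x₀ : TrivSqZeroExt A E) ∈ Ideal.span {inr e}
  · rw [Ideal.mem_span_singleton] at hyx
    obtain ⟨c, hc⟩ := tsze_inr_dvd_inr_iff.mp hyx
    have hc0 : c ≠ 0 := fun h => hx₀ (by rw [hc, h, zero_smul])
    refine ⟨a₀ * c, ?_, ?_⟩
    · intro h
      exact hc0 (forward_reg hR a₀ ha₀ c h)
    · rw [mul_smul, ← hc]
      exact hax
  · exfalso
    have hann := fqp_ann_eq hR (x := (inr x₀ : TrivSqZeroExt A E)) (y := inr e)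
      (fun h => hx₀ (tsze_inr_eq_zero_iff.mp h)) hyx hxy
    have h1 : (inl a₀ : TrivSqZeroExt A E) * inr x₀ = 0 := by
      rw [inl_mul_inr, hax, inr_zero]
    have h2 := hann (inl a₀) h1
    rw [inl_mul_inr] at h2
    exact hae (tsze_inr_eq_zero_iff.mp h2)

theorem notTF_E_cmp : ∀ e f : E, e ∈ Submodule.span A {f} ∨ f ∈ Submodule.span A {e} := by
  intro e f
  by_cases he0 : e = 0
  · exact Or.inl (he0 ▸ Submodule.zero_mem _)
  by_cases hf0 : f = 0
  · exact Or.inr (hf0 ▸ Submodule.zero_mem _)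
  by_cases hef : (inr e : TrivSqZeroExt A E) ∈ Ideal.span {inr f}
  · rw [Ideal.mem_span_singleton] at hef
    obtain ⟨c, hc⟩ := tsze_inr_dvd_inr_iff.mp hef
    exact Or.inl (Submodule.mem_span_singleton.mpr ⟨c, hc.symm⟩)
  by_cases hfe : (inr f : TrivSqZeroExt A E) ∈ Ideal.span {inr e}
  · rw [Ideal.mem_span_singleton] at hfe
    obtain ⟨c, hc⟩ := tsze_inr_dvd_inr_iff.mp hfe
    exact Or.inr (Submodule.mem_span_singleton.mpr ⟨c, hc.symm⟩)
  -- equal annihilators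
  have hann1 := fqp_ann_eq hR (x := (inr e : TrivSqZeroExt A E)) (y := inr f)
    (fun h => he0 (tsze_inr_eq_zero_iff.mp h)) hef hfe
  obtain ⟨j, hj0, hje⟩ := notTF_torsion hR ha₀ hax hx₀ e he0
  have hjN : j ∉ nilradical A := fun h => hj0 (notTF_nil_eq_bot hR ha₀ hax hx₀ j h)
  have hjf : j • f = 0 := by
    have h1 : (inl j : TrivSqZeroExt A E) * inr e = 0 := by
      rw [inl_mul_inr, hje, inr_zero]
    have h2 := hann1 (inl j) h1
    rw [inl_mul_inr] at h2
    exact tsze_inr_eq_zero_iff.mp h2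
  obtain ⟨y₀, hy₀⟩ := forward_div hR j hjN e
  have hy₀0 : y₀ ≠ 0 := fun h => he0 (by rw [hy₀, h, smul_zero])
  by_cases hyf : (inr y₀ : TrivSqZeroExt A E) ∈ Ideal.span {inr f}
  · rw [Ideal.mem_span_singleton] at hyf
    obtain ⟨c, hc⟩ := tsze_inr_dvd_inr_iff.mp hyf
    refine Or.inl (Submodule.mem_span_singleton.mpr ⟨j * c, ?_⟩)
    rw [mul_smul, ← hc, ← hy₀]
  by_cases hfy : (inr f : TrivSqZeroExt A E) ∈ Ideal.span {inr y₀}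
  · rw [Ideal.mem_span_singleton] at hfy
    obtain ⟨c, hc⟩ := tsze_inr_dvd_inr_iff.mp hfy
    have hc0 : c ≠ 0 := fun h => hf0 (by rw [hc, h, zero_smul])
    have hcN : c ∉ nilradical A := fun h => hc0 (notTF_nil_eq_bot hR ha₀ hax hx₀ c h)
    rcases forward_cmpA hR j hjN c hcN with ⟨t, ht⟩ | ⟨t, ht⟩
    · refine Or.inr (Submodule.mem_span_singleton.mpr ⟨t, ?_⟩)
      rw [hy₀, ← mul_smul, mul_comm t j, ← ht, ← hc]
    · refine Or.inl (Submodule.mem_span_singleton.mpr ⟨t, ?_⟩)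
      rw [hc, ← mul_smul, mul_comm t c, ← ht, ← hy₀]
  · exfalso
    have hann2 := fqp_ann_eq hR (x := (inr f : TrivSqZeroExt A E)) (y := inr y₀)
      (fun h => hf0 (tsze_inr_eq_zero_iff.mp h)) hfy hyf
    have h1 : (inl j : TrivSqZeroExt A E) * inr f = 0 := by
      rw [inl_mul_inr, hjf, inr_zero]
    have h2 := hann2 (inl j) h1
    rw [inl_mul_inr] at h2
    apply he0
    rw [hy₀]
    exact tsze_inr_eq_zero_iff.mp h2

theorem notTF_dvd_total : ∀ a b : A, a ∣ b ∨ b ∣ a := by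
  intro a b
  by_cases ha : a = 0
  · exact Or.inr (ha ▸ dvd_zero b)
  by_cases hb : b = 0
  · exact Or.inl (hb ▸ dvd_zero a)
  exact forward_cmpA hR a
    (fun h => ha (notTF_nil_eq_bot hR ha₀ hax hx₀ a h)) b
    (fun h => hb (notTF_nil_eq_bot hR ha₀ hax hx₀ b h))

end NotTF

theorem forward_main :
    IsFqpRing A ∧
      ((IsDomain A ∧ ChainRing A ∧
          (∀ a : A, a ≠ 0 → ∀ x : E, ∃ y : E, x = a • y) ∧
          (∀ M N : Submodule A E, M ≤ N ∨ N ≤ M)) ∨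
       ((∀ a ∈ nilradical A, ∀ x : E, a • x = 0) ∧
          (∀ a ∉ nilradical A, ∀ x : E, ∃ y : E, x = a • y) ∧
          (∀ a ∉ nilradical A, ∀ x : E, a • x = 0 → x = 0) ∧
          (∀ a : A, (∃ b : A, b ≠ 0 ∧ a * b = 0) → a ∈ nilradical A) ∧
          nilradical A * nilradical A = ⊥)) := by
  by_cases hTF : ∀ a ∉ nilradical A, ∀ x : E, a • x = 0 → x = 0
  · refine ⟨isFqpRing_of_nil_structure (nilradical A) (forward_cmpA hR) (forward_cmpN hR)
      (nil_mul_nil hR) (forward_reg hR), Or.inr ⟨nil_smul_zero hR, forward_div hR, hTF, ?_, ?_⟩⟩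
    · rintro a ⟨b, hb0, hab⟩
      by_contra haN
      exact hb0 (forward_reg hR a haN b hab)
    · refine le_bot_iff.mp (Submodule.mul_le.mpr ?_)
      intro m hm n hn
      rw [nil_mul_nil hR m hm n hn]
      exact (⊥ : Ideal A).zero_mem
  · push_neg at hTF
    obtain ⟨a₀, ha₀, x₀, hax, hx₀⟩ := hTF
    have hdvd := notTF_dvd_total hR ha₀ hax hx₀
    have hnzd : ∀ x y : A, x * y = 0 → x = 0 ∨ y = 0 := by
      intro x y hxy
      by_cases hx : x = 0
      · exact Or.inl hx
      · exact Or.inr (forward_reg hR x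
          (fun h => hx (notTF_nil_eq_bot hR ha₀ hax hx₀ x h)) y hxy)
    haveI : NoZeroDivisors A := ⟨fun {x y} h => hnzd x y h⟩
    refine ⟨isFqpRing_of_dvd_total hdvd, Or.inl ⟨?_, chainRing_of_dvd hdvd, ?_, ?_⟩⟩
    · exact NoZeroDivisors.to_isDomain A
    · intro a ha0 x
      exact forward_div hR a (fun h => ha0 (notTF_nil_eq_bot hR ha₀ hax hx₀ a h)) x
    · exact totalOrder_submodule_of_elementwise (notTF_E_cmp hR ha₀ hax hx₀)

end Forward2

section Backward
open TrivSqZeroExt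
variable {A E : Type*} [CommRing A] [IsLocalRing A] [AddCommGroup E] [Module A E]
  [Module Aᵐᵒᵖ E] [IsCentralScalar A E]

/-- If the first component of `z` is nonzero-divisible into everything relevant, a divisibility
of first components lifts to the trivial extension. -/
theorem tsze_dvd_of_fst {z w : TrivSqZeroExt A E}
    (hdiv : ∀ x : E, ∃ y : E, x = z.fst • y) (h : z.fst ∣ w.fst) : z ∣ w := by
  obtain ⟨c, hc⟩ := h
  obtain ⟨s, hs⟩ := hdiv (w.snd - c • z.snd)
  refine ⟨inl c + inr s, ?_⟩
  have hfst : (z * (inl c + inr s)).fst = w.fst := by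
    rw [fst_mul]
    simp [hc]
  have hsnd : (z * (inl c + inr s)).snd = w.snd := by
    rw [snd_mul]
    simp only [snd_add, snd_inl, snd_inr, zero_add, fst_add, fst_inl, fst_inr, add_zero,
      op_smul_eq_smul]
    rw [← hs]
    abel
  exact (TrivSqZeroExt.ext hfst.symm hsnd.symm)

/-- Backward direction, case (1). -/
theorem backward_case1 (hdom : IsDomain A) (hchain : ChainRing A)
    (hdiv : ∀ a : A, a ≠ 0 → ∀ x : E, ∃ y : E, x = a • y)
    (huni : ∀ M N : Submodule A E, M ≤ N ∨ N ≤ M) :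
    IsFqpRing (TrivSqZeroExt A E) := by
  have hAdvd : ∀ a b : A, a ∣ b ∨ b ∣ a := by
    intro a b
    rcases hchain (Ideal.span {a}) (Ideal.span {b}) with h | h
    · exact Or.inr (Ideal.mem_span_singleton.mp (h (Ideal.subset_span rfl)))
    · exact Or.inl (Ideal.mem_span_singleton.mp (h (Ideal.subset_span rfl)))
  apply isFqpRing_of_dvd_total
  intro z w
  by_cases hz : z.fst = 0
  · by_cases hw : w.fst = 0
    · -- both inr
      have hE : z.snd ∈ Submodule.span A {w.snd} ∨ w.snd ∈ Submodule.span A {z.snd} := by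
        rcases huni (Submodule.span A {z.snd}) (Submodule.span A {w.snd}) with h | h
        · exact Or.inl (h (Submodule.mem_span_singleton_self _))
        · exact Or.inr (h (Submodule.mem_span_singleton_self _))
      have hzr : z = inr z.snd := by
        rw [← inl_fst_add_inr_snd_eq z, hz, inl_zero, zero_add, snd_inr]
      have hwr : w = inr w.snd := by
        rw [← inl_fst_add_inr_snd_eq w, hw, inl_zero, zero_add, snd_inr]
      rcases hE with h | h
      · obtain ⟨c, hc⟩ := Submodule.mem_span_singleton.mp h
        refine Or.inr ⟨inl c, ?_⟩
        rw [hzr, hwr, mul_comm, inl_mul_inr, hc]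
      · obtain ⟨c, hc⟩ := Submodule.mem_span_singleton.mp h
        refine Or.inl ⟨inl c, ?_⟩
        rw [hzr, hwr, mul_comm, inl_mul_inr, hc]
    · -- w.fst ≠ 0 divides z.fst = 0
      refine Or.inr (tsze_dvd_of_fst (fun x => hdiv w.fst hw x) ?_)
      rw [hz]; exact dvd_zero _
  · rcases hAdvd z.fst w.fst with h | h
    · exact Or.inl (tsze_dvd_of_fst (fun x => hdiv z.fst hz x) h)
    · by_cases hw : w.fst = 0
      · rw [hw] at h
        obtain ⟨c, hc⟩ := h
        exact absurd (by rw [hc, zero_mul]) hz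
      · exact Or.inr (tsze_dvd_of_fst (fun x => hdiv w.fst hw x) h)

/-- The preimage of the nilradical in the trivial extension. -/
def nilFst (A E : Type*) [CommRing A] [AddCommGroup E] [Module A E]
    [Module Aᵐᵒᵖ E] [IsCentralScalar A E] : Ideal (TrivSqZeroExt A E) where
  carrier := {z | z.fst ∈ nilradical A}
  add_mem' := by
    intro x y hx hy
    show (x + y).fst ∈ nilradical A
    rw [fst_add]
    exact Ideal.add_mem _ hx hy
  zero_mem' := by
    show (0 : TrivSqZeroExt A E).fst ∈ nilradical A
    rw [fst_zero]
    exact Ideal.zero_mem _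
  smul_mem' := by
    intro c x hx
    show (c * x).fst ∈ nilradical A
    rw [fst_mul]
    exact Ideal.mul_mem_left _ _ hx

theorem mem_nilFst {z : TrivSqZeroExt A E} : z ∈ nilFst A E ↔ z.fst ∈ nilradical A := Iff.rfl

/-- Backward direction, case (2). -/
theorem backward_case2 (hA : IsFqpRing A)
    (h1NE : ∀ a ∈ nilradical A, ∀ x : E, a • x = 0)
    (h2div : ∀ a ∉ nilradical A, ∀ x : E, ∃ y : E, x = a • y)
    (h3TF : ∀ a ∉ nilradical A, ∀ x : E, a • x = 0 → x = 0)
    (h4 : ∀ a : A, (∃ b : A, b ≠ 0 ∧ a * b = 0) → a ∈ nilradical A)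
    (h5 : nilradical A * nilradical A = ⊥) :
    IsFqpRing (TrivSqZeroExt A E) := by
  -- A-level comparability facts
  have hreg : ∀ a ∉ nilradical A, ∀ b : A, a * b = 0 → b = 0 := by
    intro a ha b hab
    by_contra hb0
    exact ha (h4 a ⟨b, hb0, hab⟩)
  have acmp : ∀ a ∉ nilradical A, ∀ b ∉ nilradical A, a ∣ b ∨ b ∣ a := by
    intro a ha b hb
    rcases fqp_dvd_or hA a b with h | h | h
    · exact Or.inr h
    · exact Or.inl h
    · have := hreg a ha b h
      exact absurd (this ▸ (nilradical A).zero_mem) hb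
  have acmpN : ∀ a ∉ nilradical A, ∀ n ∈ nilradical A, a ∣ n := by
    intro a ha n hn
    rcases fqp_dvd_or hA a n with h | h | h
    · obtain ⟨c, rfl⟩ := h
      exact absurd (Ideal.mul_mem_right c _ hn) ha
    · exact h
    · rw [hreg a ha n h]
      exact dvd_zero a
  apply isFqpRing_of_nil_structure (nilFst A E)
  · -- h1 : comparability outside 𝔫
    intro z hz w hw
    rw [mem_nilFst] at hz hw
    rcases acmp z.fst hz w.fst hw with h | h
    · exact Or.inl (tsze_dvd_of_fst (fun x => h2div z.fst hz x) h)
    · exact Or.inr (tsze_dvd_of_fst (fun x => h2div w.fst hw x) h)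
  · -- h2 : outside divides inside
    intro z hz w hw
    rw [mem_nilFst] at hz hw
    exact tsze_dvd_of_fst (fun x => h2div z.fst hz x) (acmpN z.fst hz w.fst hw)
  · -- products of two elements of 𝔫 vanish
    intro z hz w hw
    rw [mem_nilFst] at hz hw
    have hfst : z.fst * w.fst = 0 := by
      have : z.fst * w.fst ∈ nilradical A * nilradical A := Ideal.mul_mem_mul hz hw
      rw [h5] at this
      exact (Ideal.mem_bot).mp this
    apply TrivSqZeroExt.ext
    · rw [fst_mul, hfst, fst_zero]
    · rw [snd_mul, snd_zero, op_smul_eq_smul, h1NE z.fst hz, h1NE w.fst hw, add_zero]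
  · -- regularity
    intro z hz w hzw
    rw [mem_nilFst] at hz
    have hfst : z.fst * w.fst = 0 := by
      rw [← fst_mul, hzw, fst_zero]
    have hwfst : w.fst = 0 := by
      by_contra h0
      exact hz (h4 z.fst ⟨w.fst, h0, hfst⟩)
    have hsnd : z.fst • w.snd = 0 := by
      have := congrArg snd hzw
      rw [snd_mul, snd_zero, hwfst, op_smul_eq_smul, zero_smul, add_zero] at this
      exact this
    have hwsnd : w.snd = 0 := h3TF z.fst hz w.snd hsnd
    apply TrivSqZeroExt.ext
    · rw [hwfst, fst_zero]
    · rw [hwsnd, snd_zero]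

end Backward

/-! ### Main theorem -/

/-- for a local ring `A` with nilradical `N` and a nonzero module `E`,
`R = A ⋉ E` is an fqp-ring iff `A` is an fqp-ring and either (1) `A` is a valuation domain
and `E` is divisible and uniserial, or (2) `E` is divisible and torsion-free over `A/N`,
every zero-divisor of `A` lies in `N`, and `N² = 0`. -/
theorem trivSqZeroExt_fqp_iff_of_local {A E : Type*} [CommRing A] [IsLocalRing A]
    [AddCommGroup E] [Module A E] [Module Aᵐᵒᵖ E] [IsCentralScalar A E] [Nontrivial E] :
    IsFqpRing (TrivSqZeroExt A E) ↔
      (IsFqpRing A ∧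
        ((IsDomain A ∧ ChainRing A ∧
            (∀ a : A, a ≠ 0 → ∀ x : E, ∃ y : E, x = a • y) ∧
            (∀ M N : Submodule A E, M ≤ N ∨ N ≤ M)) ∨
         ((∀ a ∈ nilradical A, ∀ x : E, a • x = 0) ∧
            (∀ a ∉ nilradical A, ∀ x : E, ∃ y : E, x = a • y) ∧
            (∀ a ∉ nilradical A, ∀ x : E, a • x = 0 → x = 0) ∧
            (∀ a : A, (∃ b : A, b ≠ 0 ∧ a * b = 0) → a ∈ nilradical A) ∧
            nilradical A * nilradical A = ⊥))) := by
  constructor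
  · intro hR
    exact forward_main hR
  · rintro ⟨hA, hcase | hcase⟩
    · obtain ⟨hdom, hchain, hdiv, huni⟩ := hcase
      exact backward_case1 hdom hchain hdiv huni
    · obtain ⟨h1NE, h2div, h3TF, h4, h5⟩ := hcase
      exact backward_case2 hA h1NE h2div h3TF h4 h5
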